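/- arXiv:2003.05238 — 5 statements merged into one kernel-verified Lean document; each statement's English description precedes it below -/
import Mathlib

section
/- Let SP' ⊂ SP ⊆ S be a strict inclusion of subsets of the property set S of a class C. If Edges(SP') > Edges(SP), then AMI(SP) < AM, and consequently also AMI(SP') < AM. (This is the key intermediate inference in the paper's proof of Theorem 4.1.) -/
open Classical in
/-- Multiplicity of star patterns: number of distinct restrictions to `SP`
of the object-assignment of entities in `C`. -/
noncomputable def AMI {α P O : Type*} (C : Finset α) (v : α → P → O)
    (SP : Finset P) : ℕ :=
  (C.image (fun s => fun p => if p ∈ SP then some (v s p) else none)).card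

/-- Number of instances of the class. -/
def AM {α : Type*} (C : Finset α) : ℕ := C.card

/-- Edge count of the star patterns of `C` over `SP`. -/
noncomputable def Edges {α P O : Type*} (C : Finset α) (S : Finset P)
    (v : α → P → O) (SP : Finset P) : ℕ :=
  AMI C v SP * (SP.card + 1) + AM C * (S.card - SP.card)

open Classical in
/-- Class multiplicity: number of entities of `C` matching the same star
pattern objects as `s` on `SP`. -/
noncomputable def Mclass {α P O : Type*} (C : Finset α) (v : α → P → O)
    (SP : Finset P) (s : α) : ℕ :=
  (C.filter (fun t => ∀ p ∈ SP, v t p = v s p)).card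

/-- Class multiplicity inverse, in the rationals. -/
noncomputable def MI {α P O : Type*} (C : Finset α) (v : α → P → O)
    (SP : Finset P) (s : α) : ℚ :=
  1 / (Mclass C v SP s : ℚ)

/-- If `SP' ⊂ SP ⊆ S` and `Edges(SP') > Edges(SP)`, then `AMI(SP) < AM` and
consequently also `AMI(SP') < AM`. -/
theorem AMI_lt_AM_of_edges_gt {α P O : Type*} (C : Finset α) (S : Finset P)
    (v : α → P → O) (SP SP' : Finset P)
    (hsub1 : SP' ⊂ SP) (hsub0 : SP ⊆ S)
    (hgt : Edges C S v SP' > Edges C S v SP) :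
    AMI C v SP < AM C ∧ AMI C v SP' < AM C := by
  classical
  have hAle : AMI C v SP ≤ AM C := Finset.card_image_le
  have hmono : AMI C v SP' ≤ AMI C v SP := by
    unfold AMI
    calc (C.image (fun s p => if p ∈ SP' then some (v s p) else none)).card
        = ((C.image (fun s p => if p ∈ SP then some (v s p) else none)).image
            (fun f p => if p ∈ SP' then f p else none)).card := by
          have hfun : (fun s p => if p ∈ SP' then some (v s p) else none)
              = ((fun f p => if p ∈ SP' then f p else none) ∘
                  fun (s : α) (p : P) => if p ∈ SP then some (v s p) else none) := by
            funext s p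
            by_cases h : p ∈ SP'
            · simp [h, hsub1.subset h]
            · simp [h]
          rw [Finset.image_image, ← hfun]
      _ ≤ _ := Finset.card_image_le
  have hlt : AMI C v SP < AM C := by
    by_contra h
    push_neg at h
    have heq : AMI C v SP = AM C := le_antisymm hAle h
    have ha : SP'.card ≤ S.card :=
      Finset.card_le_card (hsub1.subset.trans hsub0)
    have hb : SP.card ≤ S.card := Finset.card_le_card hsub0
    unfold Edges at hgt
    rw [heq] at hgt
    have h2 : AMI C v SP' * (SP'.card + 1) + AM C * (S.card - SP'.card)
        ≤ AM C * (SP'.card + 1) + AM C * (S.card - SP'.card) :=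
      Nat.add_le_add_right
        (Nat.mul_le_mul_right _ (le_trans hmono hAle)) _
    have e1 : AM C * (SP'.card + 1) + AM C * (S.card - SP'.card)
        = AM C * (S.card + 1) := by
      rw [← Nat.mul_add]; congr 1; omega
    have e2 : AM C * (SP.card + 1) + AM C * (S.card - SP.card)
        = AM C * (S.card + 1) := by
      rw [← Nat.mul_add]; congr 1; omega
    omega
  exact ⟨hlt, lt_of_le_of_lt hmono hlt⟩
end

section
/- Suppose C is nonempty and SP ⊆ S satisfies AMI(SP) = 1, i.e., all class instances match a single star pattern over SP. Then for every subset SP' ⊆ SP, Edges(SP') ≥ Edges(SP). (This justifies the stopping criterion of the G.FSP algorithm, which terminates as soon as the multiplicity of star patterns equals one.) -/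
/-- If `C` is nonempty and all class instances match a single star pattern over
`SP ⊆ S` (i.e. `AMI(SP) = 1`), then for every `SP' ⊆ SP`,
`Edges(SP') ≥ Edges(SP)`. -/
theorem edges_ge_of_AMI_eq_one {α P O : Type*} (C : Finset α) (S : Finset P)
    (v : α → P → O) (SP : Finset P)
    (hC : C.Nonempty) (hsub : SP ⊆ S) (hone : AMI C v SP = 1) :
    ∀ SP' : Finset P, SP' ⊆ SP → Edges C S v SP' ≥ Edges C S v SP := by
  classical
  intro SP' hsub'
  have hAM : 1 ≤ AM C := Finset.card_pos.mpr hC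
  have hAMI' : AMI C v SP' = 1 := by
    have hle : AMI C v SP' ≤ 1 := by
      rw [← hone]
      unfold AMI
      have himg : C.image (fun s => fun p => if p ∈ SP' then some (v s p) else none)
          = (C.image (fun s => fun p => if p ∈ SP then some (v s p) else none)).image
            (fun f => fun p => if p ∈ SP' then f p else none) := by
        rw [Finset.image_image]
        apply Finset.image_congr
        intro s _
        funext p
        by_cases h : p ∈ SP'
        · simp [h, hsub' h]
        · simp [h]
      rw [himg]
      exact Finset.card_image_le
    have hge : 1 ≤ AMI C v SP' := Finset.card_pos.mpr (hC.image _)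
    omega
  unfold Edges
  rw [hone, hAMI']
  have h1 : SP'.card ≤ SP.card := Finset.card_le_card hsub'
  have h2 : SP.card ≤ S.card := Finset.card_le_card hsub
  have key : AM C * (S.card - SP.card) + (SP.card - SP'.card)
      ≤ AM C * (S.card - SP'.card) := by
    have he : S.card - SP'.card = (S.card - SP.card) + (SP.card - SP'.card) := by omega
    rw [he, Nat.mul_add]
    have := Nat.le_mul_of_pos_left (SP.card - SP'.card) (show 0 < AM C by omega)
    omega
  set x := AM C * (S.card - SP.card) with hx
  set y := AM C * (S.card - SP'.card) with hy
  omega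
end

section
/- With the factorization construction below, the number of triples of the factorized graph satisfies the exact identity E'.card = E.card − K.card * (n + 1) + K.card + n + 1. In words, factorizing a frequent star pattern with K.card matching entities and n properties removes K.card · (n + 1) labeled edges and adds K.card + n + 1 labeled edges. -/
/-!
`R` is the union of the stars of the entities of `K`; these stars have distinct subjects, so they
are disjoint, each of size `n + 1`, and contained in `E`. Every triple of `A` mentions the fresh
surrogate, so `A` is disjoint from `E`, and it consists of `K.card` links plus the surrogate's own
star of size `n + 1`.
-/

open Finset

section StarTriples

variable {α L ι : Type*} [DecidableEq α] [DecidableEq L] [Fintype ι]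

def starTriples (typeOf : L) (c : α) (p : ι → L) (o : ι → α) (s : α) : Finset (α × L × α) :=
  {(s, typeOf, c)} ∪ univ.image (fun i => (s, p i, o i))

variable {typeOf : L} {c : α} {p : ι → L} {o : ι → α}

lemma fst_of_mem_starTriples {s : α} {t : α × L × α} (ht : t ∈ starTriples typeOf c p o s) :
    t.1 = s := by
  simp only [starTriples, mem_union, mem_singleton, mem_image, mem_univ, true_and] at ht
  rcases ht with rfl | ⟨i, rfl⟩ <;> rfl

lemma starTriples_subset {E : Finset (α × L × α)} {s : α}
    (hs : (s, typeOf, c) ∈ E ∧ ∀ i, (s, p i, o i) ∈ E) : starTriples typeOf c p o s ⊆ E := by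
  intro t ht
  simp only [starTriples, mem_union, mem_singleton, mem_image, mem_univ, true_and] at ht
  rcases ht with rfl | ⟨i, rfl⟩
  exacts [hs.1, hs.2 i]

lemma card_starTriples (hp : Function.Injective p) (htp : typeOf ∉ Set.range p) (s : α) :
    (starTriples typeOf c p o s).card = Fintype.card ι + 1 := by
  have hinj : Function.Injective (fun i => (s, p i, o i)) :=
    fun i j hij => hp (congrArg (fun t : α × L × α => t.2.1) hij)
  have hdisj : Disjoint {(s, typeOf, c)} (univ.image (fun i => (s, p i, o i))) := by
    simp only [disjoint_singleton_left, mem_image, mem_univ, true_and, not_exists]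
    exact fun i hi => htp ⟨i, congrArg (fun t : α × L × α => t.2.1) hi⟩
  rw [starTriples, card_union_of_disjoint hdisj, card_image_of_injective _ hinj, card_singleton,
    card_univ, add_comm]

/-- Stars with distinct centres share no triple. -/
lemma card_biUnion_starTriples (hp : Function.Injective p) (htp : typeOf ∉ Set.range p)
    (K : Finset α) :
    (K.biUnion (starTriples typeOf c p o)).card = K.card * (Fintype.card ι + 1) := by
  rw [card_biUnion fun s _ s' _ hss' => disjoint_left.2 fun t ht ht' =>
    hss' ((fst_of_mem_starTriples ht).symm.trans (fst_of_mem_starTriples ht'))]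
  simp only [card_starTriples hp htp, sum_const, smul_eq_mul]

/-- The surrogate's star and its `instanceOf` links are disjoint because their subjects differ. -/
lemma card_image_union_starTriples (hp : Function.Injective p) (htp : typeOf ∉ Set.range p)
    (instanceOf : L) {K : Finset α} {sg : α} (hsg : sg ∉ K) :
    (K.image (fun s => (s, instanceOf, sg)) ∪ starTriples typeOf c p o sg).card =
      K.card + (Fintype.card ι + 1) := by
  have hdisj : Disjoint (K.image (fun s => (s, instanceOf, sg))) (starTriples typeOf c p o sg) :=
    disjoint_left.2 fun t ht ht' => by
      obtain ⟨s, hs, rfl⟩ := mem_image.1 ht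
      exact hsg (fst_of_mem_starTriples ht' ▸ hs)
  rw [card_union_of_disjoint hdisj, card_starTriples hp htp,
    card_image_of_injective _ fun s s' h => congrArg Prod.fst h]

end StarTriples

theorem factorized_card_eq_general
    {α L : Type*} [DecidableEq α] [DecidableEq L]
    (E : Finset (α × L × α)) (n : ℕ)
    (typeOf instanceOf : L)
    (p : Fin n → L) (hp : Function.Injective p)
    (htp : typeOf ∉ Set.range p)
    (c : α) (o : Fin n → α) (K : Finset α)
    (hK : ∀ s ∈ K, (s, typeOf, c) ∈ E ∧ ∀ i : Fin n, (s, p i, o i) ∈ E)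
    (sg : α) (hsg : ∀ t ∈ E, t.1 ≠ sg ∧ t.2.2 ≠ sg)
    (R A E' : Finset (α × L × α))
    (hR : R = K.biUnion (fun s =>
      {(s, typeOf, c)} ∪ Finset.univ.image (fun i : Fin n => (s, p i, o i))))
    (hA : A = K.image (fun s => (s, instanceOf, sg)) ∪ {(sg, typeOf, c)} ∪
      Finset.univ.image (fun i : Fin n => (sg, p i, o i)))
    (hE' : E' = (E \ R) ∪ A)
    : E'.card = E.card - K.card * (n + 1) + K.card + n + 1 := by
  change R = K.biUnion (starTriples typeOf c p o) at hR
  rw [union_assoc] at hA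
  change A = K.image _ ∪ starTriples typeOf c p o sg at hA
  have hsgK : sg ∉ K := fun h => (hsg _ (hK sg h).1).1 rfl
  have hRE : R ⊆ E := hR ▸ biUnion_subset.2 fun s hs => starTriples_subset (hK s hs)
  have hEA : Disjoint E A := disjoint_left.2 fun t htE htA => by
    rw [hA, mem_union, mem_image] at htA
    rcases htA with ⟨s, -, rfl⟩ | htA
    exacts [(hsg _ htE).2 rfl, (hsg _ htE).1 (fst_of_mem_starTriples htA)]
  have hRcard : R.card = K.card * (n + 1) := by
    rw [hR, card_biUnion_starTriples hp htp, Fintype.card_fin]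
  have hAcard : A.card = K.card + (n + 1) := by
    rw [hA, card_image_union_starTriples hp htp instanceOf hsgK, Fintype.card_fin]
  have hRle : K.card * (n + 1) ≤ E.card := hRcard ▸ card_le_card hRE
  rw [hE', card_union_of_disjoint (hEA.mono_left sdiff_subset), card_sdiff_of_subset hRE,
    hRcard, hAcard]
  omega

/-- Exact count of triples of the factorized graph:
`E'.card = E.card − K.card·(n+1) + K.card + n + 1`. -/
theorem factorized_card_eq
    {α L : Type*} [DecidableEq α] [DecidableEq L]
    (E : Finset (α × L × α)) (n : ℕ) (hn : 1 ≤ n)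
    (typeOf instanceOf : L) (hlabels : typeOf ≠ instanceOf)
    (p : Fin n → L) (hp : Function.Injective p)
    (htp : typeOf ∉ Set.range p) (hip : instanceOf ∉ Set.range p)
    (c : α) (o : Fin n → α) (K : Finset α)
    (hK : ∀ s ∈ K, (s, typeOf, c) ∈ E ∧ ∀ i : Fin n, (s, p i, o i) ∈ E)
    (sg : α) (hsg : ∀ t ∈ E, t.1 ≠ sg ∧ t.2.2 ≠ sg)
    (R A E' : Finset (α × L × α))
    (hR : R = K.biUnion (fun s =>
      {(s, typeOf, c)} ∪ Finset.univ.image (fun i : Fin n => (s, p i, o i))))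
    (hA : A = K.image (fun s => (s, instanceOf, sg)) ∪ {(sg, typeOf, c)} ∪
      Finset.univ.image (fun i : Fin n => (sg, p i, o i)))
    (hE' : E' = (E \ R) ∪ A)
    : E'.card = E.card - K.card * (n + 1) + K.card + n + 1 :=
  factorized_card_eq_general E n typeOf instanceOf p hp htp c o K hK sg hsg R A E' hR hA hE'
end

section
/- With the factorization construction below, if the frequent star pattern has at least two matching entities (K.card ≥ 2) and at least two properties (n ≥ 2), then the factorized graph has strictly fewer triples than the original graph: E'.card < E.card. In words, replacing a frequent star pattern by a compact RDF molecule with a surrogate entity strictly reduces the number of labeled edges of the RDF graph. -/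
/-- If the frequent star pattern has at least two matching entities and at
least two properties, the factorized graph is strictly smaller. -/
theorem factorized_card_lt
    {α L : Type*} [DecidableEq α] [DecidableEq L]
    (E : Finset (α × L × α)) (n : ℕ) (hn : 1 ≤ n)
    (typeOf instanceOf : L) (hlabels : typeOf ≠ instanceOf)
    (p : Fin n → L) (hp : Function.Injective p)
    (htp : typeOf ∉ Set.range p) (hip : instanceOf ∉ Set.range p)
    (c : α) (o : Fin n → α) (K : Finset α)
    (hK : ∀ s ∈ K, (s, typeOf, c) ∈ E ∧ ∀ i : Fin n, (s, p i, o i) ∈ E)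
    (sg : α) (hsg : ∀ t ∈ E, t.1 ≠ sg ∧ t.2.2 ≠ sg)
    (R A E' : Finset (α × L × α))
    (hR : R = K.biUnion (fun s =>
      {(s, typeOf, c)} ∪ Finset.univ.image (fun i : Fin n => (s, p i, o i))))
    (hA : A = K.image (fun s => (s, instanceOf, sg)) ∪ {(sg, typeOf, c)} ∪
      Finset.univ.image (fun i : Fin n => (sg, p i, o i)))
    (hE' : E' = (E \ R) ∪ A)
    (hK2 : 2 ≤ K.card) (hn2 : 2 ≤ n)
    : E'.card < E.card := by
  have hRsub : R ⊆ E := by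
    subst hR
    intro t ht
    simp only [Finset.mem_biUnion, Finset.mem_union, Finset.mem_singleton,
      Finset.mem_image, Finset.mem_univ, true_and] at ht
    obtain ⟨s, hs, ht | ⟨i, hi⟩⟩ := ht
    · exact ht ▸ (hK s hs).1
    · exact hi ▸ (hK s hs).2 i
  have hRcard : R.card = K.card * (n + 1) := by
    subst hR
    rw [Finset.card_biUnion]
    · rw [Finset.sum_congr rfl (fun s _ => ?_), Finset.sum_const, smul_eq_mul]
      rw [Finset.card_union_of_disjoint, Finset.card_singleton,
        Finset.card_image_of_injective _ (fun i j h => hp (by simpa using congrArg (fun t => t.2.1) h)),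
        Finset.card_univ, Fintype.card_fin]
      · ring
      · simp only [Finset.disjoint_singleton_left, Finset.mem_image, Finset.mem_univ,
          true_and, not_exists]
        intro i h
        refine htp ⟨i, ?_⟩
        simpa using congrArg (fun t => t.2.1) h
    · intro s _ t _ hst
      simp only [Finset.disjoint_left, Finset.mem_union, Finset.mem_singleton,
        Finset.mem_image, Finset.mem_univ, true_and]
      rintro x hx hy
      have h1 : x.1 = s := by
        rcases hx with hx | ⟨i, rfl⟩
        · rw [hx]
        · rfl
      have h2 : x.1 = t := by
        rcases hy with hy | ⟨j, hy⟩
        · rw [hy]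
        · rw [← hy]
      exact hst (h1.symm.trans h2)
  have hAcard : A.card ≤ K.card + 1 + n := by
    subst hA
    calc _ ≤ (K.image (fun s => (s, instanceOf, sg)) ∪ {(sg, typeOf, c)}).card
        + (Finset.univ.image (fun i : Fin n => (sg, p i, o i))).card :=
          Finset.card_union_le _ _
      _ ≤ (K.image (fun s => (s, instanceOf, sg))).card + 1 + n := by
          have h1 := Finset.card_union_le (K.image (fun s => (s, instanceOf, sg)))
            ({(sg, typeOf, c)} : Finset (α × L × α))
          have h2 : (Finset.univ.image (fun i : Fin n => (sg, p i, o i))).card ≤ n := by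
            simpa using Finset.card_image_le (s := (Finset.univ : Finset (Fin n)))
              (f := fun i : Fin n => (sg, p i, o i))
          simp only [Finset.card_singleton] at h1
          omega
      _ ≤ K.card + 1 + n := by
          have := Finset.card_image_le (s := K) (f := fun s => (s, instanceOf, sg))
          omega
  have h1 : E'.card ≤ (E \ R).card + A.card := hE' ▸ Finset.card_union_le _ _
  have h2 : (E \ R).card = E.card - R.card := Finset.card_sdiff_of_subset hRsub
  have h3 : R.card ≤ E.card := Finset.card_le_card hRsub
  have h4 : 2 * n + K.card ≤ K.card * (n + 1) := by nlinarith
  omega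
end

section
/- The factorization construction below is lossless with respect to the InstanceOf axioms: for every triple (s, l, t) ∈ E of the original graph, either (s, l, t) ∈ E', or both (s, instanceOf, sg) ∈ E' and (sg, l, t) ∈ E'. Consequently, every triple of the original RDF graph is entailed by the factorized RDF graph under the two InstanceOf axioms (if (x, instanceOf, y) and (y, typeOf, C) then (x, typeOf, C); if (x, instanceOf, y) and (y, q, z) then (x, q, z)). -/
/-- Losslessness of factorization w.r.t. the InstanceOf axioms: every triple
of the original graph is either kept, or recoverable via the surrogate. -/
theorem factorized_lossless
    {α L : Type*} [DecidableEq α] [DecidableEq L]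
    (E : Finset (α × L × α)) (n : ℕ) (hn : 1 ≤ n)
    (typeOf instanceOf : L) (hlabels : typeOf ≠ instanceOf)
    (p : Fin n → L) (hp : Function.Injective p)
    (htp : typeOf ∉ Set.range p) (hip : instanceOf ∉ Set.range p)
    (c : α) (o : Fin n → α) (K : Finset α)
    (hK : ∀ s ∈ K, (s, typeOf, c) ∈ E ∧ ∀ i : Fin n, (s, p i, o i) ∈ E)
    (sg : α) (hsg : ∀ t ∈ E, t.1 ≠ sg ∧ t.2.2 ≠ sg)
    (R A E' : Finset (α × L × α))
    (hR : R = K.biUnion (fun s =>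
      {(s, typeOf, c)} ∪ Finset.univ.image (fun i : Fin n => (s, p i, o i))))
    (hA : A = K.image (fun s => (s, instanceOf, sg)) ∪ {(sg, typeOf, c)} ∪
      Finset.univ.image (fun i : Fin n => (sg, p i, o i)))
    (hE' : E' = (E \ R) ∪ A)
    : ∀ s l t, (s, l, t) ∈ E →
      (s, l, t) ∈ E' ∨ ((s, instanceOf, sg) ∈ E' ∧ (sg, l, t) ∈ E') := by
  subst hR hA hE'
  intro s l t ht
  by_cases hmem : (s, l, t) ∈ K.biUnion (fun s =>
      {(s, typeOf, c)} ∪ Finset.univ.image (fun i : Fin n => (s, p i, o i)))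
  · right
    simp only [Finset.mem_biUnion, Finset.mem_union, Finset.mem_singleton,
      Finset.mem_image, Finset.mem_univ, true_and] at hmem
    obtain ⟨x, hx, hcase⟩ := hmem
    have hsK : s ∈ K ∧ ((l = typeOf ∧ t = c) ∨ ∃ i, l = p i ∧ t = o i) := by
      rcases hcase with h | ⟨i, h⟩
      · have h1 : s = x ∧ l = typeOf ∧ t = c := by
          simpa [Prod.ext_iff] using h
        exact ⟨h1.1 ▸ hx, Or.inl ⟨h1.2.1, h1.2.2⟩⟩
      · have h1 : x = s ∧ p i = l ∧ o i = t := by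
          simpa [Prod.ext_iff] using h
        exact ⟨h1.1 ▸ hx, Or.inr ⟨i, h1.2.1.symm, h1.2.2.symm⟩⟩
    obtain ⟨hsK, hcase⟩ := hsK
    constructor
    · apply Finset.mem_union_right
      apply Finset.mem_union_left
      apply Finset.mem_union_left
      exact Finset.mem_image_of_mem _ hsK
    · apply Finset.mem_union_right
      rcases hcase with ⟨hl, ht'⟩ | ⟨i, hl, ht'⟩
      · subst hl ht'
        exact Finset.mem_union_left _ (Finset.mem_union_right _ (Finset.mem_singleton_self _))
      · subst hl ht'
        exact Finset.mem_union_right _ (Finset.mem_image_of_mem _ (Finset.mem_univ i))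
  · left
    exact Finset.mem_union_left _ (Finset.mem_sdiff.mpr ⟨ht, hmem⟩)
end
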